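/- arXiv:2405.17645 — 3 statements merged into one kernel-verified Lean document; each statement's English description precedes it below -/
import Mathlib

section
/- Let μ ⊆ λ be (ordinary) partitions with n ≥ ℓ(λ). For every semistandard set-valued tableau T of shape μ with entries in [1,n], there exists a semistandard set-valued tableau T' of shape λ with entries in [1,n] such that d(T') ≥ d(T). -/
/-!
Ordinary (unshifted) semistandard set-valued tableaux, in French notation:
rows are indexed from `0` (the bottom, longest row); the box in row `i`,
column `j` of the Young diagram of `lam` exists iff `j < lam i`.
-/

/-- Box `(i, j)` belongs to the Young diagram of `lam`. -/
def YBox (lam : ℕ → ℕ) (i j : ℕ) : Prop := j < lam i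

/-- A semistandard set-valued tableau of shape `lam` with entries in `{1, …, n}`:
each box gets a nonempty subset of `{1, …, n}`; the max of each box is strictly less
than the min of the box above and weakly less than the min of the box to its right
(stated below in pointwise form). -/
structure SVT (lam : ℕ → ℕ) (n : ℕ) where
  T : ℕ × ℕ → Finset ℕ
  nonempty : ∀ i j, YBox lam i j → (T (i, j)).Nonempty
  bounded : ∀ i j, YBox lam i j → ∀ a ∈ T (i, j), 1 ≤ a ∧ a ≤ n
  row : ∀ i j, YBox lam i j → YBox lam i (j + 1) →
    ∀ a ∈ T (i, j), ∀ b ∈ T (i, j + 1), a ≤ b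
  col : ∀ i j, YBox lam i j → YBox lam (i + 1) j →
    ∀ a ∈ T (i, j), ∀ b ∈ T (i + 1, j), a < b

/-- The degree of a set-valued filling: total number of entries over all boxes
(`ℓ` = number of rows of the shape). -/
def tabDeg (lam : ℕ → ℕ) (ℓ : ℕ) (T : ℕ × ℕ → Finset ℕ) : ℕ :=
  ∑ i ∈ Finset.range ℓ, ∑ j ∈ Finset.range (lam i), (T (i, j)).card

/-- `lam` is a partition with exactly `ℓ` (positive, weakly decreasing) parts. -/
def IsPartitionOf (lam : ℕ → ℕ) (ℓ : ℕ) : Prop :=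
  (∀ i, i + 1 < ℓ → lam (i + 1) ≤ lam i) ∧ (∀ i, i < ℓ → 0 < lam i) ∧ ∀ i, ℓ ≤ i → lam i = 0

/-- `lam` is a strict partition with exactly `ℓ` parts. -/
def IsStrictPartitionOf (lam : ℕ → ℕ) (ℓ : ℕ) : Prop :=
  (∀ i, i + 1 < ℓ → lam (i + 1) < lam i) ∧ (∀ i, i < ℓ → 0 < lam i) ∧ ∀ i, ℓ ≤ i → lam i = 0

/-- Componentwise containment of partitions. -/
def Subpartition (mu lam : ℕ → ℕ) : Prop := ∀ i, mu i ≤ lam i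

/-- `mu` (with `ℓmu` parts) is the largest strict partition contained in `lam`. -/
def IsLargestStrictPartitionIn (mu lam : ℕ → ℕ) (ℓmu : ℕ) : Prop :=
  IsStrictPartitionOf mu ℓmu ∧ Subpartition mu lam ∧
    ∀ ν m, IsStrictPartitionOf ν m → Subpartition ν lam → Subpartition ν mu

/-- The degree of the symmetric Grothendieck polynomial `G_{lam,n}`: the maximum
degree of a semistandard set-valued tableau of shape `lam` with entries in `{1,…,n}`. -/
noncomputable def degG (lam : ℕ → ℕ) (ℓ n : ℕ) : ℕ :=
  sSup {d | ∃ T : SVT lam n, tabDeg lam ℓ T.T = d}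

-- auxiliary lemmas
lemma part_anti {mu : ℕ → ℕ} {L : ℕ} (h : IsPartitionOf mu L) :
    ∀ i j : ℕ, i ≤ j → mu j ≤ mu i := by
  intro i j hij
  induction j, hij using Nat.le_induction with
  | base => exact le_rfl
  | succ j hij ih =>
    refine le_trans ?_ ih
    by_cases hL : j + 1 < L
    · exact h.1 j hL
    · rw [h.2.2 (j + 1) (le_of_not_gt hL)]
      exact Nat.zero_le _

lemma sum_ite_lt (m k : ℕ) (f : ℕ → ℕ) (hk : k ≤ m) :
    ∑ i ∈ Finset.range m, (if i < k then f i else 0) = ∑ i ∈ Finset.range k, f i := by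
  rw [← Finset.sum_subset (Finset.range_subset_range.mpr hk)
      (fun i _ hi => if_neg (fun h => hi (Finset.mem_range.mpr h)))]
  exact Finset.sum_congr rfl (fun i hi => if_pos (Finset.mem_range.mp hi))

lemma tabDeg_ext (lam : ℕ → ℕ) (L m : ℕ) (hLm : L ≤ m) (h0 : ∀ i, L ≤ i → lam i = 0)
    (f : ℕ × ℕ → Finset ℕ) : tabDeg lam m f = tabDeg lam L f := by
  unfold tabDeg
  rw [← Finset.sum_subset (Finset.range_subset_range.mpr hLm)]
  intro i hi hni
  rw [h0 i (le_of_not_gt (fun h => hni (Finset.mem_range.mpr h)))]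
  simp

section StepDefs

variable {n : ℕ} {mu : ℕ → ℕ}

/-- min of the column-`mu r` box in row `i` (or `n+1` if no box). -/
def Mf (T : SVT mu n) (r : ℕ) (i : ℕ) : ℕ :=
  if h : mu r < mu i then (T.T (i, mu r)).min' (T.nonempty i (mu r) h) else n + 1

/-- min of the box to the right of column `mu r` in row `i` (or `n` if no box). -/
def mif (T : SVT mu n) (r : ℕ) (i : ℕ) : ℕ :=
  if h : mu r + 1 < mu i then (T.T (i, mu r + 1)).min' (T.nonempty i (mu r + 1) h) else n

def M'f (T : SVT mu n) (r : ℕ) (i : ℕ) : ℕ := min (Mf T r i) (n - r + i)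

def S'f (T : SVT mu n) (r : ℕ) (i : ℕ) : Finset ℕ :=
  Finset.Icc (M'f T r i) (min (M'f T r (i + 1) - 1) (mif T r i))

def T'f (T : SVT mu n) (r : ℕ) (p : ℕ × ℕ) : Finset ℕ :=
  if p.2 = mu r ∧ p.1 ≤ r then S'f T r p.1 else T.T p

end StepDefs

lemma step_lemma (n : ℕ) (mu : ℕ → ℕ) (Lmu r : ℕ) (hmu : IsPartitionOf mu Lmu)
    (hrn : r < n) (hrL : r ≤ Lmu) (hstrict : ∀ i, i < r → mu r < mu i)
    (T : SVT mu n) :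
    ∃ T' : SVT (fun i => if i = r then mu r + 1 else mu i) n,
      tabDeg mu Lmu T.T ≤
        tabDeg (fun i => if i = r then mu r + 1 else mu i) (max Lmu (r + 1)) T'.T := by
  classical
  have hanti : ∀ i j : ℕ, i ≤ j → mu j ≤ mu i := part_anti hmu
  -- basic facts about Mf
  have hMmem : ∀ i, i < r → Mf T r i ∈ T.T (i, mu r) := by
    intro i hi
    have h : mu r < mu i := hstrict i hi
    rw [Mf, dif_pos h]
    exact Finset.min'_mem _ _
  have hMle : ∀ i, i < r → ∀ a ∈ T.T (i, mu r), Mf T r i ≤ a := by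
    intro i hi a ha
    have h : mu r < mu i := hstrict i hi
    rw [Mf, dif_pos h]
    exact Finset.min'_le _ a ha
  have hMtop : ∀ i, r ≤ i → Mf T r i = n + 1 := by
    intro i hi
    have : ¬ (mu r < mu i) := not_lt.mpr (hanti r i hi)
    rw [Mf, dif_neg this]
  have hMpos : ∀ i, 1 ≤ Mf T r i := by
    intro i
    by_cases h : mu r < mu i
    · rw [Mf, dif_pos h]
      exact (T.bounded i (mu r) h _ (Finset.min'_mem _ _)).1
    · rw [Mf, dif_neg h]; omega
  have hMn : ∀ i, i < r → Mf T r i ≤ n := by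
    intro i hi
    exact (T.bounded i (mu r) (hstrict i hi) _ (hMmem i hi)).2
  have hmin : ∀ i, mif T r i ≤ n := by
    intro i
    by_cases h : mu r + 1 < mu i
    · rw [mif, dif_pos h]
      exact (T.bounded i (mu r + 1) h _ (Finset.min'_mem _ _)).2
    · rw [mif, dif_neg h]
  have hMlemi : ∀ i, i < r → Mf T r i ≤ mif T r i := by
    intro i hi
    by_cases h : mu r + 1 < mu i
    · rw [mif, dif_pos h]
      apply Finset.le_min'
      intro b hb
      exact T.row i (mu r) (hstrict i hi) h _ (hMmem i hi) b hb
    · rw [mif, dif_neg h]; exact hMn i hi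
  have hMmono : ∀ i, i < r → Mf T r i < Mf T r (i + 1) := by
    intro i hi
    by_cases h : i + 1 < r
    · exact T.col i (mu r) (hstrict i hi) (hstrict (i + 1) h) _ (hMmem i hi) _ (hMmem (i + 1) h)
    · rw [hMtop (i + 1) (by omega)]
      have := hMn i hi; omega
  have hM'mono : ∀ i, i ≤ r → M'f T r i < M'f T r (i + 1) := by
    intro i hi
    rcases lt_or_eq_of_le hi with hi | hi
    · have h1 := hMmono i hi
      have h2 : M'f T r i ≤ Mf T r i := min_le_left _ _
      have h3 : M'f T r i ≤ n - r + i := min_le_right _ _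
      exact lt_min (by omega) (by omega)
    · rw [hi, M'f, M'f, hMtop r le_rfl, hMtop (r + 1) (by omega)]
      omega
  have hM'r : M'f T r r = n := by
    rw [M'f, hMtop r le_rfl]; omega
  have hM'pos : ∀ i, 1 ≤ M'f T r i := by
    intro i
    have := hMpos i
    rw [M'f]
    rcases Nat.lt_or_ge i r with h | h <;> omega
  have hM'n : ∀ i, i ≤ r → M'f T r i ≤ n := by
    intro i hi
    have : n - r + i ≤ n := by omega
    rw [M'f]; omega
  have hmir : mif T r r = n := by
    rw [mif, dif_neg (by omega : ¬ (mu r + 1 < mu r))]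
  have hM'lemi : ∀ i, i ≤ r → M'f T r i ≤ mif T r i := by
    intro i hi
    rcases lt_or_eq_of_le hi with hi | hi
    · exact le_trans (min_le_left _ _) (hMlemi i hi)
    · rw [hi, hM'r, hmir]
  have hS'ne : ∀ i, i ≤ r → M'f T r i ≤ min (M'f T r (i + 1) - 1) (mif T r i) := by
    intro i hi
    have h1 := hM'mono i hi
    have h2 := hM'lemi i hi
    omega
  have hS'lb : ∀ i a, a ∈ S'f T r i → M'f T r i ≤ a := by
    intro i a ha; exact (Finset.mem_Icc.mp ha).1
  have hS'ub : ∀ i a, a ∈ S'f T r i → a ≤ min (M'f T r (i + 1) - 1) (mif T r i) := by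
    intro i a ha; exact (Finset.mem_Icc.mp ha).2
  -- descending bound to the left of column mu r
  have hdesc : 0 < mu r → ∀ k, k ≤ r → ∀ a ∈ T.T (r - k, mu r - 1), a + k ≤ n := by
    intro hcpos
    intro k
    induction k with
    | zero =>
      intro _ a ha
      have hb : mu r - 1 < mu r := by omega
      have := (T.bounded r (mu r - 1) hb a (by simpa using ha)).2
      simpa using this
    | succ k ih =>
      intro hk a ha
      have hik : r - (k + 1) < r := by omega
      have hbox1 : mu r - 1 < mu (r - (k + 1)) := by
        have := hstrict (r - (k + 1)) hik; omega
      have hbox2 : mu r - 1 < mu (r - k) := by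
        rcases Nat.lt_or_ge (r - k) r with h | h
        · have := hstrict (r - k) h; omega
        · have : r - k = r := by omega
          rw [this]; omega
      have hne : (T.T (r - k, mu r - 1)).Nonempty := T.nonempty _ _ hbox2
      obtain ⟨b, hb⟩ := hne
      have hstep : a < b := by
        have hsucc : r - (k + 1) + 1 = r - k := by omega
        have := T.col (r - (k + 1)) (mu r - 1) hbox1 (by rw [hsucc]; exact hbox2) a ha
        rw [hsucc] at this
        exact this b hb
      have := ih (by omega) b hb
      omega
  have hleft : 0 < mu r → ∀ i, i ≤ r → ∀ a ∈ T.T (i, mu r - 1), a ≤ M'f T r i := by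
    intro hcpos i hi a ha
    have h1 : a + (r - i) ≤ n := by
      have := hdesc hcpos (r - i) (by omega) a (by
        have : r - (r - i) = i := by omega
        rw [this]; exact ha)
      omega
    have h2 : a ≤ Mf T r i := by
      rcases lt_or_eq_of_le hi with hi' | hi'
      · have hbox : mu r - 1 < mu i := by have := hstrict i hi'; omega
        have hc1 : mu r - 1 + 1 = mu r := by omega
        have := T.row i (mu r - 1) hbox (by rw [hc1]; exact hstrict i hi') a ha
          (Mf T r i) (by rw [hc1] at *; exact hMmem i hi')
        exact this
      · rw [hi', hMtop r le_rfl]; omega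
    rw [M'f]; omega
  have hYB : ∀ i j, YBox (fun i => if i = r then mu r + 1 else mu i) i j →
      ¬(j = mu r ∧ i ≤ r) → YBox mu i j := by
    intro i j h1 h2
    by_cases hir : i = r
    · simp only [YBox, hir, if_true, eq_self_iff_true] at h1
      have hne : j ≠ mu r := fun h => h2 ⟨h, le_of_eq hir⟩
      simp only [YBox, hir]
      omega
    · simpa only [YBox, if_neg hir] using h1
  refine ⟨⟨T'f T r, ?_, ?_, ?_, ?_⟩, ?_⟩
  · -- nonempty
    intro i j hbox
    by_cases hmod : j = mu r ∧ i ≤ r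
    · simp only [T'f, hmod, and_self, if_true, S'f]
      exact ⟨M'f T r i, Finset.mem_Icc.mpr ⟨le_rfl, hS'ne i hmod.2⟩⟩
    · simp only [T'f, if_neg hmod]
      exact T.nonempty i j (hYB i j hbox hmod)
  · -- bounded
    intro i j hbox a ha
    by_cases hmod : j = mu r ∧ i ≤ r
    · simp only [T'f, if_pos hmod, S'f, Finset.mem_Icc] at ha
      have h1 := hM'pos i
      have h2 : a ≤ mif T r i := le_trans ha.2 (min_le_right _ _)
      have h3 := hmin i
      omega
    · simp only [T'f, if_neg hmod] at ha
      exact T.bounded i j (hYB i j hbox hmod) a ha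
  · -- row
    intro i j h1 h2 a ha b hb
    by_cases hmod2 : j + 1 = mu r ∧ i ≤ r
    · -- right box is modified, left is not (j = mu r - 1)
      obtain ⟨hj, hi⟩ := hmod2
      have hcpos : 0 < mu r := by omega
      have hjne : ¬(j = mu r ∧ i ≤ r) := by
        rintro ⟨h, -⟩; omega
      simp only [T'f, if_neg hjne] at ha
      simp only [T'f, if_pos (show j + 1 = mu r ∧ i ≤ r from ⟨hj, hi⟩)] at hb
      have ha' : a ∈ T.T (i, mu r - 1) := by
        have : j = mu r - 1 := by omega
        rwa [this] at ha
      have h3 : a ≤ M'f T r i := hleft hcpos i hi a ha'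
      have h4 : M'f T r i ≤ b := hS'lb i b hb
      omega
    · by_cases hmod1 : j = mu r ∧ i ≤ r
      · obtain ⟨hj, hi⟩ := hmod1
        have hir : i ≠ r := by
          intro h
          rw [h] at h2
          simp only [YBox, if_true, eq_self_iff_true] at h2
          omega
        have hilt : i < r := lt_of_le_of_ne hi hir
        have hbox2 : mu r + 1 < mu i := by
          have := h2
          simp only [YBox, if_neg hir] at this
          omega
        rw [T'f, if_pos (show j = mu r ∧ i ≤ r from ⟨hj, hi⟩)] at ha
        rw [T'f, if_neg hmod2] at hb
        have h3 : a ≤ mif T r i := le_trans (hS'ub i a ha) (min_le_right _ _)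
        have h4 : mif T r i ≤ b := by
          rw [mif, dif_pos hbox2]
          refine Finset.min'_le _ b ?_
          have hj1 : j + 1 = mu r + 1 := by omega
          rwa [hj1] at hb
        omega
      · simp only [T'f, if_neg hmod1] at ha
        simp only [T'f, if_neg hmod2] at hb
        exact T.row i j (hYB i j h1 hmod1) (hYB i (j + 1) h2 hmod2) a ha b hb
  · -- col
    intro i j h1 h2 a ha b hb
    by_cases hj : j = mu r
    · have hi1 : i + 1 ≤ r := by
        by_contra hcon
        have hir : i + 1 ≠ r := by omega
        have hw : j < mu (i + 1) := by simpa only [YBox, if_neg hir] using h2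
        have := hanti r (i + 1) (by omega)
        omega
      have hi : i ≤ r := by omega
      rw [T'f, if_pos (show j = mu r ∧ i ≤ r from ⟨hj, hi⟩)] at ha
      rw [T'f, if_pos (show j = mu r ∧ i + 1 ≤ r from ⟨hj, hi1⟩)] at hb
      have h3 : a ≤ min (M'f T r (i + 1) - 1) (mif T r i) := hS'ub i a ha
      have h4 : M'f T r (i + 1) ≤ b := hS'lb (i + 1) b hb
      have h5 := hM'pos (i + 1)
      omega
    · have hm1 : ¬(j = mu r ∧ i ≤ r) := fun h => hj h.1
      have hm2 : ¬(j = mu r ∧ i + 1 ≤ r) := fun h => hj h.1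
      simp only [T'f, if_neg hm1] at ha
      simp only [T'f, if_neg hm2] at hb
      exact T.col i j (hYB i j h1 hm1) (hYB (i + 1) j h2 hm2) a ha b hb
  · -- degree
    show tabDeg mu Lmu T.T ≤
      tabDeg (fun i => if i = r then mu r + 1 else mu i) (max Lmu (r + 1)) (T'f T r)
    have hrowEq : ∀ i,
        (∑ j ∈ Finset.range (if i = r then mu r + 1 else mu i), (T'f T r (i, j)).card)
          + (if i < r then (T.T (i, mu r)).card else 0)
        = (∑ j ∈ Finset.range (mu i), (T.T (i, j)).card)
          + (if i < r + 1 then (S'f T r i).card else 0) := by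
      intro i
      rcases lt_trichotomy i r with hi | hi | hi
      · have hir : i ≠ r := ne_of_lt hi
        rw [if_neg hir, if_pos hi, if_pos (by omega : i < r + 1)]
        have hcm : mu r ∈ Finset.range (mu i) := Finset.mem_range.mpr (hstrict i hi)
        have e1 : ∑ j ∈ Finset.range (mu i), (T'f T r (i, j)).card
            = (T'f T r (i, mu r)).card
              + ∑ j ∈ (Finset.range (mu i)).erase (mu r), (T'f T r (i, j)).card :=
          (Finset.add_sum_erase _ _ hcm).symm
        have e1' : (T'f T r (i, mu r)).card = (S'f T r i).card := by
          rw [T'f, if_pos (show mu r = mu r ∧ i ≤ r from ⟨rfl, le_of_lt hi⟩)]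
        have e1'' : ∑ j ∈ (Finset.range (mu i)).erase (mu r), (T'f T r (i, j)).card
            = ∑ j ∈ (Finset.range (mu i)).erase (mu r), (T.T (i, j)).card := by
          refine Finset.sum_congr rfl fun j hj => ?_
          have hne : j ≠ mu r := (Finset.mem_erase.mp hj).1
          rw [T'f, if_neg (fun h => hne h.1)]
        have e2 : ∑ j ∈ Finset.range (mu i), (T.T (i, j)).card
            = (T.T (i, mu r)).card
              + ∑ j ∈ (Finset.range (mu i)).erase (mu r), (T.T (i, j)).card :=
          (Finset.add_sum_erase _ _ hcm).symm
        rw [e1, e1', e1'']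
        omega
      · rw [hi]
        rw [if_pos rfl, if_neg (lt_irrefl r), if_pos (by omega : r < r + 1),
          Finset.sum_range_succ]
        have e1 : (T'f T r (r, mu r)).card = (S'f T r r).card := by
          rw [T'f, if_pos (show mu r = mu r ∧ r ≤ r from ⟨rfl, le_rfl⟩)]
        have e2 : ∑ j ∈ Finset.range (mu r), (T'f T r (r, j)).card
            = ∑ j ∈ Finset.range (mu r), (T.T (r, j)).card := by
          refine Finset.sum_congr rfl fun j hj => ?_
          have hne : j ≠ mu r := by have := Finset.mem_range.mp hj; omega
          rw [T'f, if_neg (fun h => hne h.1)]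
        rw [e1, e2]
        omega
      · rw [if_neg (by omega : ¬ i = r), if_neg (by omega : ¬ i < r),
          if_neg (by omega : ¬ i < r + 1)]
        have e2 : ∑ j ∈ Finset.range (mu i), (T'f T r (i, j)).card
            = ∑ j ∈ Finset.range (mu i), (T.T (i, j)).card := by
          refine Finset.sum_congr rfl fun j hj => ?_
          rw [T'f, if_neg (fun h => by omega)]
        rw [e2]
    have key2 : ∀ k, k ≤ r →
        (∑ i ∈ Finset.range k, (T.T (i, mu r)).card) + M'f T r k ≤
        (∑ i ∈ Finset.range k, (S'f T r i).card) + Mf T r k := by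
      intro k
      induction k with
      | zero =>
        intro _
        simp only [Finset.sum_range_zero, zero_add]
        exact min_le_left _ _
      | succ k ih =>
        intro hk1
        have hk : k < r := hk1
        have ihk := ih (le_of_lt hk)
        have hsubI : T.T (k, mu r) ⊆
            Finset.Icc (Mf T r k) (min (Mf T r (k + 1) - 1) (mif T r k)) := by
          intro a ha
          have h1 : Mf T r k ≤ a := hMle k hk a ha
          have h2 : a < Mf T r (k + 1) := by
            by_cases h : k + 1 < r
            · exact T.col k (mu r) (hstrict k hk) (hstrict (k + 1) h) a ha _ (hMmem (k + 1) h)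
            · rw [hMtop (k + 1) (by omega)]
              have := (T.bounded k (mu r) (hstrict k hk) a ha).2
              omega
          have h3 : a ≤ mif T r k := by
            by_cases h : mu r + 1 < mu k
            · rw [mif, dif_pos h]
              exact T.row k (mu r) (hstrict k hk) h a ha _ (Finset.min'_mem _ _)
            · rw [mif, dif_neg h]
              exact (T.bounded k (mu r) (hstrict k hk) a ha).2
          exact Finset.mem_Icc.mpr ⟨h1, by omega⟩
        have ht : (T.T (k, mu r)).card ≤ min (Mf T r (k + 1) - 1) (mif T r k) + 1 - Mf T r k := by
          have := Finset.card_le_card hsubI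
          rwa [Nat.card_Icc] at this
        have hs : (S'f T r k).card = min (M'f T r (k + 1) - 1) (mif T r k) + 1 - M'f T r k := by
          rw [S'f, Nat.card_Icc]
        have h1 : M'f T r k ≤ Mf T r k := min_le_left _ _
        have h2 : M'f T r (k + 1) ≤ Mf T r (k + 1) := min_le_left _ _
        have h3 : Mf T r k ≤ min (Mf T r (k + 1) - 1) (mif T r k) :=
          (Finset.mem_Icc.mp (hsubI (hMmem k hk))).2
        have h4 : M'f T r k ≤ min (M'f T r (k + 1) - 1) (mif T r k) := hS'ne k (le_of_lt hk)
        have h5 := hM'pos (k + 1)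
        have h6 := hMpos (k + 1)
        have hA : min (Mf T r (k + 1) - 1) (mif T r k) + M'f T r (k + 1) ≤
            min (M'f T r (k + 1) - 1) (mif T r k) + Mf T r (k + 1) := by
          rcases le_total (mif T r k) (M'f T r (k + 1) - 1) with h | h
          · rw [min_eq_right h]
            have := min_le_right (Mf T r (k + 1) - 1) (mif T r k)
            omega
          · rw [min_eq_left h]
            rcases le_total (Mf T r (k + 1) - 1) (mif T r k) with h7 | h7
            · rw [min_eq_left h7]; omega
            · rw [min_eq_right h7]; omega
        rw [Finset.sum_range_succ, Finset.sum_range_succ]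
        omega
    have hsum : ∑ i ∈ Finset.range (max Lmu (r + 1)),
        ((∑ j ∈ Finset.range (if i = r then mu r + 1 else mu i), (T'f T r (i, j)).card)
          + (if i < r then (T.T (i, mu r)).card else 0))
        = ∑ i ∈ Finset.range (max Lmu (r + 1)),
        ((∑ j ∈ Finset.range (mu i), (T.T (i, j)).card)
          + (if i < r + 1 then (S'f T r i).card else 0)) :=
      Finset.sum_congr rfl fun i _ => hrowEq i
    rw [Finset.sum_add_distrib, Finset.sum_add_distrib,
        sum_ite_lt _ r _ (by omega), sum_ite_lt _ (r + 1) _ (by omega)] at hsum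
    have hdef1 : tabDeg (fun i => if i = r then mu r + 1 else mu i) (max Lmu (r + 1)) (T'f T r)
        = ∑ i ∈ Finset.range (max Lmu (r + 1)),
            ∑ j ∈ Finset.range (if i = r then mu r + 1 else mu i), (T'f T r (i, j)).card := rfl
    have hdef2 : tabDeg mu (max Lmu (r + 1)) T.T
        = ∑ i ∈ Finset.range (max Lmu (r + 1)),
            ∑ j ∈ Finset.range (mu i), (T.T (i, j)).card := rfl
    have hdeg2 : tabDeg mu (max Lmu (r + 1)) T.T = tabDeg mu Lmu T.T :=
      tabDeg_ext mu Lmu _ (by omega) hmu.2.2 T.T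
    have hkey := key2 r le_rfl
    rw [hM'r, hMtop r le_rfl] at hkey
    have hS'r : 1 ≤ (S'f T r r).card :=
      Finset.card_pos.mpr ⟨M'f T r r, Finset.mem_Icc.mpr ⟨le_rfl, hS'ne r le_rfl⟩⟩
    have hsum_r1 : ∑ i ∈ Finset.range (r + 1), (S'f T r i).card
        = ∑ i ∈ Finset.range r, (S'f T r i).card + (S'f T r r).card :=
      Finset.sum_range_succ _ _
    rw [hdef1]
    rw [hdef2] at hdeg2
    omega

lemma nu_part (mu : ℕ → ℕ) (Lmu r : ℕ) (hmu : IsPartitionOf mu Lmu) (hrL : r ≤ Lmu)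
    (hstrict : ∀ i, i < r → mu r < mu i) :
    IsPartitionOf (fun i => if i = r then mu r + 1 else mu i) (max Lmu (r + 1)) := by
  refine ⟨?_, ?_, ?_⟩
  · intro i hi
    dsimp only
    by_cases h1 : i + 1 = r
    · have h2 : i ≠ r := by omega
      rw [if_pos h1, if_neg h2]
      have := hstrict i (by omega)
      omega
    · by_cases h2 : i = r
      · rw [if_neg h1, if_pos h2]
        have := part_anti hmu r (i + 1) (by omega)
        omega
      · rw [if_neg h1, if_neg h2]
        exact part_anti hmu i (i + 1) (by omega)
  · intro i hi
    dsimp only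
    by_cases h2 : i = r
    · rw [if_pos h2]; omega
    · rw [if_neg h2]
      have hiL : i < Lmu := by omega
      exact hmu.2.1 i hiL
  · intro i hi
    dsimp only
    have h2 : i ≠ r := by omega
    rw [if_neg h2]
    exact hmu.2.2 i (by omega)

lemma aux_main (lam : ℕ → ℕ) (Llam n : ℕ) (hlam : IsPartitionOf lam Llam) (hn : Llam ≤ n) :
    ∀ s : ℕ, ∀ mu : ℕ → ℕ, ∀ Lmu : ℕ, IsPartitionOf mu Lmu → Subpartition mu lam →
      (∑ i ∈ Finset.range Llam, (lam i - mu i)) ≤ s → ∀ T : SVT mu n,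
      ∃ T' : SVT lam n, tabDeg mu Lmu T.T ≤ tabDeg lam Llam T'.T := by
  intro s
  induction s with
  | zero =>
    intro mu Lmu hmu hsub hs T
    have heq : mu = lam := by
      funext i
      rcases Nat.lt_or_ge i Llam with h | h
      · have h1 : lam i - mu i = 0 :=
          Finset.sum_eq_zero_iff.mp (Nat.le_zero.mp hs) i (Finset.mem_range.mpr h)
        have h2 := hsub i
        omega
      · have h1 := hlam.2.2 i h
        have h2 := hsub i
        omega
    subst heq
    have hL : Lmu = Llam := by
      by_contra hne
      rcases Nat.lt_or_ge Lmu Llam with h | h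
      · have h1 := hlam.2.1 Lmu h
        have h2 := hmu.2.2 Lmu le_rfl
        omega
      · have h3 : Llam < Lmu := by omega
        have h1 := hmu.2.1 Llam h3
        have h2 := hlam.2.2 Llam le_rfl
        omega
    subst hL
    exact ⟨T, le_rfl⟩
  | succ s ih =>
    intro mu Lmu hmu hsub hs T
    by_cases h0 : (∑ i ∈ Finset.range Llam, (lam i - mu i)) ≤ s
    · exact ih mu Lmu hmu hsub h0 T
    · have hex : ∃ i, mu i < lam i := by
        by_contra hno
        push_neg at hno
        apply h0
        have : (∑ i ∈ Finset.range Llam, (lam i - mu i)) = 0 :=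
          Finset.sum_eq_zero fun i _ => by have := hno i; omega
        omega
      classical
      have hrspec : mu (Nat.find hex) < lam (Nat.find hex) := Nat.find_spec hex
      set r := Nat.find hex with hrdef
      have hrmin : ∀ i, i < r → ¬ (mu i < lam i) := fun i hi => Nat.find_min hex hi
      have hrL : r < Llam := by
        by_contra h
        rw [hlam.2.2 r (le_of_not_gt h)] at hrspec; omega
      have hrLmu : r ≤ Lmu := by
        by_contra h
        push_neg at h
        have h1 := hrmin Lmu h
        have h2 := hmu.2.2 Lmu le_rfl
        have h3 := hlam.2.1 Lmu (lt_trans h hrL)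
        have h4 := hsub (Lmu + 1)
        have h5 := part_anti hlam Lmu r (le_of_lt h)
        omega
      have hstrict : ∀ i, i < r → mu r < mu i := by
        intro i hi
        have h1 := hrmin i hi
        have h2 := hsub i
        have h3 : lam r ≤ lam i := part_anti hlam i r (le_of_lt hi)
        omega
      obtain ⟨T2, hT2⟩ := step_lemma n mu Lmu r hmu (by omega) hrLmu hstrict T
      have hnupart := nu_part mu Lmu r hmu hrLmu hstrict
      have hnusub : Subpartition (fun i => if i = r then mu r + 1 else mu i) lam := by
        intro i
        dsimp only
        by_cases h2 : i = r
        · rw [if_pos h2, h2]; omega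
        · rw [if_neg h2]; exact hsub i
      have hlt : (∑ i ∈ Finset.range Llam, (lam i - (if i = r then mu r + 1 else mu i)))
          < ∑ i ∈ Finset.range Llam, (lam i - mu i) := by
        apply Finset.sum_lt_sum
        · intro i _
          by_cases h2 : i = r
          · rw [if_pos h2, h2]; omega
          · rw [if_neg h2]
        · exact ⟨r, Finset.mem_range.mpr hrL, by rw [if_pos rfl]; omega⟩
      obtain ⟨T', hT'⟩ := ih (fun i => if i = r then mu r + 1 else mu i) (max Lmu (r + 1))
        hnupart hnusub (by omega) T2
      exact ⟨T', le_trans hT2 hT'⟩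


/-- if `mu ⊆ lam` are partitions and `n ≥ ℓ(lam)`, then every semistandard
set-valued tableau of shape `mu` with entries in `[1,n]` admits a semistandard
set-valued tableau of shape `lam` with entries in `[1,n]` of weakly larger degree. -/
theorem stmt6 (mu lam : ℕ → ℕ) (Lmu Llam : ℕ)
    (hmu : IsPartitionOf mu Lmu) (hlam : IsPartitionOf lam Llam)
    (hsub : Subpartition mu lam) (n : ℕ) (hn : Llam ≤ n)
    (T : SVT mu n) :
    ∃ T' : SVT lam n, tabDeg mu Lmu T.T ≤ tabDeg lam Llam T'.T := by
  exact aux_main lam Llam n hlam hn (∑ i ∈ Finset.range Llam, (lam i - mu i)) mu Lmu hmu hsub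
    le_rfl T
end

section
/- Let λ be a partition, μ the largest strict partition contained in λ, and n ≥ ℓ(λ). For every semistandard set-valued tableau T of shape λ with entries in [1,n] there is a semistandard set-valued tableau S of strict-partition shape contained in λ and containing μ with d(S) = d(T); consequently the maximum degree of set-valued tableaux of shape λ equals the maximum degree of set-valued tableaux of shape μ. -/
-- ## helpers

/-- antitonicity of a partition -/
lemma part_anti_s7 {lam : ℕ → ℕ} {L : ℕ} (hP : IsPartitionOf lam L) :
    ∀ r r', r ≤ r' → r' < L → lam r' ≤ lam r := by
  intro r r' hrr hr'
  obtain ⟨d, rfl⟩ := Nat.exists_eq_add_of_le hrr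
  clear hrr
  induction d with
  | zero => exact le_rfl
  | succ d ih =>
    have h1 : r + d < L := by omega
    exact le_trans (hP.1 (r + d) (by omega)) (ih h1)

/-- the minimal tableau -/
def minT (lam : ℕ → ℕ) (n : ℕ) (h : ∀ i, lam i ≠ 0 → i < n) : SVT lam n where
  T := fun x => {x.1 + 1}
  nonempty := fun i j _ => ⟨i + 1, Finset.mem_singleton_self _⟩
  bounded := by
    intro i j hb a ha
    rw [Finset.mem_singleton] at ha
    have hi : i < n := h i (by intro h0; exact absurd (show j < lam i from hb) (by omega))
    omega
  row := by
    intro i j _ _ a ha b hb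
    rw [Finset.mem_singleton] at ha hb; omega
  col := by
    intro i j _ _ a ha b hb
    rw [Finset.mem_singleton] at ha hb; omega

lemma tabDeg_le_bound (lam : ℕ → ℕ) (L n : ℕ) (T : SVT lam n) :
    tabDeg lam L T.T ≤ ∑ r ∈ Finset.range L, lam r * n := by
  refine Finset.sum_le_sum fun r _ => ?_
  calc ∑ j ∈ Finset.range (lam r), (T.T (r, j)).card
      ≤ ∑ j ∈ Finset.range (lam r), n := by
        refine Finset.sum_le_sum fun j hj => ?_
        rw [Finset.mem_range] at hj
        have hsub : T.T (r, j) ⊆ Finset.Icc 1 n := by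
          intro a ha
          have := T.bounded r j hj a ha
          rw [Finset.mem_Icc]; omega
        calc (T.T (r, j)).card ≤ (Finset.Icc 1 n).card := Finset.card_le_card hsub
          _ = n := by rw [Nat.card_Icc]; omega
    _ = lam r * n := by rw [Finset.sum_const, Finset.card_range, smul_eq_mul]

lemma degG_set_nonempty (lam : ℕ → ℕ) (L n : ℕ) (h : ∀ i, lam i ≠ 0 → i < n) :
    {d | ∃ T : SVT lam n, tabDeg lam L T.T = d}.Nonempty :=
  ⟨tabDeg lam L (minT lam n h).T, ⟨minT lam n h, rfl⟩⟩

lemma degG_set_bdd (lam : ℕ → ℕ) (L n : ℕ) :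
    BddAbove {d | ∃ T : SVT lam n, tabDeg lam L T.T = d} := by
  refine ⟨∑ r ∈ Finset.range L, lam r * n, fun d hd => ?_⟩
  obtain ⟨T, rfl⟩ := hd
  exact tabDeg_le_bound lam L n T

lemma tabDeg_trunc (lam : ℕ → ℕ) (L L' : ℕ) (h : L' ≤ L) (h0 : ∀ r, L' ≤ r → lam r = 0)
    (T : ℕ × ℕ → Finset ℕ) : tabDeg lam L T = tabDeg lam L' T := by
  unfold tabDeg
  refine (Finset.sum_subset (Finset.range_subset_range.2 h) fun r hr hr' => ?_).symm
  rw [Finset.mem_range] at hr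
  rw [Finset.mem_range] at hr'
  rw [h0 r (by omega)]
  simp

private lemma sum_except {N j0 : ℕ} (hj0 : j0 < N) (f g : ℕ → ℕ)
    (h : ∀ j, j < N → j ≠ j0 → f j = g j) :
    f j0 + ∑ j ∈ Finset.range N, g j = g j0 + ∑ j ∈ Finset.range N, f j := by
  have hm : j0 ∈ Finset.range N := Finset.mem_range.2 hj0
  have hf := Finset.add_sum_erase (Finset.range N) f hm
  have hg := Finset.add_sum_erase (Finset.range N) g hm
  have he : ∑ j ∈ (Finset.range N).erase j0, f j = ∑ j ∈ (Finset.range N).erase j0, g j := by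
    refine Finset.sum_congr rfl fun j hj => ?_
    rw [Finset.mem_erase, Finset.mem_range] at hj
    exact h j hj.2 hj.1
  omega

private lemma chainExt : ∀ (i B : ℕ) (S : ℕ → Finset ℕ) (m p : ℕ → ℕ) (q : ℕ),
    i + 2 ≤ B →
    (∀ r, r ≤ i → (S r).Nonempty) →
    (∀ r, r ≤ i → ∀ a ∈ S r, 1 ≤ a ∧ a ≤ B) →
    (∀ r, r ≤ i → ∀ a ∈ S r, a ≤ m r) →
    (∀ r, r ≤ i → ∀ a ∈ S r, p r ≤ a) →
    (∀ r, r ≤ i → p r + (i + 1 - r) ≤ B) →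
    (∀ r, r < i → ∀ a ∈ S r, ∀ b ∈ S (r+1), a < b) →
    q ≤ B →
    ∃ U : ℕ → Finset ℕ,
      (∀ r, r ≤ i + 1 → (U r).Nonempty) ∧
      (∀ r, r ≤ i + 1 → ∀ a ∈ U r, 1 ≤ a ∧ a ≤ B) ∧
      (∀ r, r ≤ i → ∀ a ∈ U r, a ≤ m r) ∧
      (∀ r, r ≤ i → ∀ a ∈ U r, p r ≤ a) ∧
      (∀ a ∈ U (i+1), q ≤ a) ∧
      (∀ r, r < i + 1 → ∀ a ∈ U r, ∀ b ∈ U (r+1), a < b) ∧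
      (∑ r ∈ Finset.range (i+1), (S r).card) ≤ ∑ r ∈ Finset.range (i+2), (U r).card := by
  intro i
  induction i using Nat.strong_induction_on with
  | _ i IH =>
  intro B S m p q hB hne hbd hm hp hpB hch hq
  have hSi := hne i le_rfl
  set M := (S i).max' hSi with hM
  have hMmem : M ∈ S i := (S i).max'_mem hSi
  have hMB : M ≤ B := (hbd i le_rfl M hMmem).2
  by_cases h1 : M < B
  · -- append a fresh singleton on top
    obtain ⟨c, hc1, hc2, hc3⟩ : ∃ c, M + 1 ≤ c ∧ q ≤ c ∧ c ≤ B :=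
      ⟨max (M+1) q, le_max_left _ _, le_max_right _ _, max_le (by omega) hq⟩
    set U : ℕ → Finset ℕ := fun r => if r = i + 1 then {c} else S r with hU
    have hU1 : ∀ r, r ≠ i + 1 → U r = S r := fun r h => by
      simp only [hU]; rw [if_neg h]
    have hU2 : U (i+1) = {c} := by simp [hU]
    refine ⟨U, ?_, ?_, ?_, ?_, ?_, ?_, ?_⟩
    · intro r hr
      by_cases h : r = i + 1
      · rw [h, hU2]; exact ⟨c, Finset.mem_singleton_self c⟩
      · rw [hU1 r h]; exact hne r (by omega)
    · intro r hr a ha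
      by_cases h : r = i + 1
      · rw [h, hU2, Finset.mem_singleton] at ha; omega
      · rw [hU1 r h] at ha; exact hbd r (by omega) a ha
    · intro r hr a ha
      rw [hU1 r (by omega)] at ha; exact hm r hr a ha
    · intro r hr a ha
      rw [hU1 r (by omega)] at ha; exact hp r hr a ha
    · intro a ha; rw [hU2, Finset.mem_singleton] at ha; omega
    · intro r hr a ha b hb
      by_cases h : r + 1 = i + 1
      · rw [h, hU2, Finset.mem_singleton] at hb
        have hr' : r = i := by omega
        rw [hU1 r (by omega), hr'] at ha
        have : a ≤ M := (S i).le_max' a ha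
        omega
      · rw [hU1 _ h] at hb
        rw [hU1 r (by omega)] at ha
        exact hch r (by omega) a ha b hb
    · rw [Finset.sum_range_succ (fun r => (U r).card)]
      have e3 : ∑ r ∈ Finset.range (i+1), (U r).card
          = ∑ r ∈ Finset.range (i+1), (S r).card := by
        refine Finset.sum_congr rfl fun r hr => ?_
        rw [Finset.mem_range] at hr
        rw [hU1 r (by omega)]
      rw [e3]; omega
  · have hMB' : M = B := by omega
    by_cases h2 : 2 ≤ (S i).card
    · -- move B up to the new top box
      have hBmem : B ∈ S i := hMB' ▸ hMmem
      set U : ℕ → Finset ℕ :=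
        fun r => if r = i + 1 then {B} else if r = i then (S i).erase B else S r with hU
      have hU1 : ∀ r, r ≠ i + 1 → r ≠ i → U r = S r := fun r h h' => by
        simp only [hU]; rw [if_neg h, if_neg h']
      have hU2 : U (i+1) = {B} := by simp [hU]
      have hU3 : U i = (S i).erase B := by simp [hU]
      refine ⟨U, ?_, ?_, ?_, ?_, ?_, ?_, ?_⟩
      · intro r hr
        by_cases h : r = i + 1
        · rw [h, hU2]; exact ⟨B, Finset.mem_singleton_self B⟩
        · by_cases h' : r = i
          · rw [h', hU3, ← Finset.card_pos, Finset.card_erase_of_mem hBmem]; omega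
          · rw [hU1 r h h']; exact hne r (by omega)
      · intro r hr a ha
        by_cases h : r = i + 1
        · rw [h, hU2, Finset.mem_singleton] at ha; omega
        · by_cases h' : r = i
          · rw [h', hU3] at ha
            exact hbd i le_rfl a (Finset.mem_of_mem_erase ha)
          · rw [hU1 r h h'] at ha; exact hbd r (by omega) a ha
      · intro r hr a ha
        by_cases h' : r = i
        · rw [h', hU3] at ha
          rw [h']; exact hm i le_rfl a (Finset.mem_of_mem_erase ha)
        · rw [hU1 r (by omega) h'] at ha; exact hm r hr a ha
      · intro r hr a ha
        by_cases h' : r = i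
        · rw [h', hU3] at ha
          rw [h']; exact hp i le_rfl a (Finset.mem_of_mem_erase ha)
        · rw [hU1 r (by omega) h'] at ha; exact hp r hr a ha
      · intro a ha; rw [hU2, Finset.mem_singleton] at ha; omega
      · intro r hr a ha b hb
        by_cases h : r + 1 = i + 1
        · have hr' : r = i := by omega
          rw [h, hU2, Finset.mem_singleton] at hb
          rw [hr', hU3] at ha
          have h3 := Finset.mem_erase.1 ha
          have h4 : a ≤ M := (S i).le_max' a h3.2
          have h5 : a ≠ B := h3.1
          omega
        · have hb' : b ∈ S (r+1) := by
            by_cases hri : r + 1 = i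
            · rw [hri, hU3] at hb
              exact hri ▸ Finset.mem_of_mem_erase hb
            · rwa [hU1 _ h hri] at hb
          have ha' : a ∈ S r := by
            rwa [hU1 r (by omega) (by omega)] at ha
          exact hch r (by omega) a ha' b hb'
      · rw [Finset.sum_range_succ (fun r => (S r).card),
          Finset.sum_range_succ (fun r => (U r).card),
          Finset.sum_range_succ (fun r => (U r).card)]
        have e3 : ∑ r ∈ Finset.range i, (U r).card = ∑ r ∈ Finset.range i, (S r).card := by
          refine Finset.sum_congr rfl fun r hr => ?_
          rw [Finset.mem_range] at hr
          rw [hU1 r (by omega) (by omega)]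
        rw [e3, hU2, hU3, Finset.card_singleton, Finset.card_erase_of_mem hBmem]
        omega
    · -- S i = {B}
      have hSisingle : S i = {B} := by
        have h1c : (S i).card = 1 := by
          have := Finset.card_pos.2 hSi; omega
        obtain ⟨a, ha⟩ := Finset.card_eq_one.1 h1c
        have hM' : M ∈ S i := hMmem
        rw [ha] at hM' ⊢
        simp only [Finset.mem_singleton] at hM'
        rw [← hMB', hM']
      rcases Nat.eq_zero_or_pos i with hi0 | hipos
      · subst hi0
        set U : ℕ → Finset ℕ := fun r => if r = 0 then {B - 1} else {B} with hU
        have hU1 : U 0 = {B-1} := by simp [hU]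
        have hU2 : ∀ r, r ≠ 0 → U r = {B} := fun r h => by
          simp only [hU]; rw [if_neg h]
        refine ⟨U, ?_, ?_, ?_, ?_, ?_, ?_, ?_⟩
        · intro r hr
          by_cases h : r = 0
          · rw [h, hU1]; exact ⟨B-1, Finset.mem_singleton_self _⟩
          · rw [hU2 r h]; exact ⟨B, Finset.mem_singleton_self _⟩
        · intro r hr a ha
          by_cases h : r = 0
          · rw [h, hU1, Finset.mem_singleton] at ha; omega
          · rw [hU2 r h, Finset.mem_singleton] at ha; omega
        · intro r hr a ha
          have hr0 : r = 0 := by omega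
          rw [hr0, hU1, Finset.mem_singleton] at ha
          have : B ≤ m 0 := hm 0 le_rfl B (hSisingle ▸ Finset.mem_singleton_self B)
          rw [hr0]; omega
        · intro r hr a ha
          have hr0 : r = 0 := by omega
          rw [hr0, hU1, Finset.mem_singleton] at ha
          have := hpB 0 le_rfl
          rw [hr0]; omega
        · intro a ha; rw [hU2 1 (by omega), Finset.mem_singleton] at ha; omega
        · intro r hr a ha b hb
          have hr0 : r = 0 := by omega
          rw [hr0, hU1, Finset.mem_singleton] at ha
          rw [hr0, hU2 1 (by omega), Finset.mem_singleton] at hb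
          omega
        · have e0 : U 1 = {B} := hU2 1 one_ne_zero
          simp only [Finset.sum_range_succ, Finset.sum_range_zero, hU1, e0,
            hSisingle, Finset.card_singleton]
          omega
      · -- recursive case
        obtain ⟨j, hj⟩ := Nat.exists_eq_add_of_lt hipos
        have hij : i = j + 1 := by omega
        subst hij
        have hprefB : ∀ r, r ≤ j → ∀ a ∈ S r, 1 ≤ a ∧ a ≤ B - 1 := by
          intro r hr a ha
          refine ⟨(hbd r (by omega) a ha).1, ?_⟩
          obtain ⟨b, hb⟩ := hne (r+1) (by omega)
          have hab : a < b := hch r (by omega) a ha b hb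
          have : b ≤ B := (hbd (r+1) (by omega) b hb).2
          omega
        obtain ⟨U₀, hU0ne, hU0bd, hU0m, hU0p, hU0q, hU0ch, hU0sum⟩ :=
          IH j (by omega) (B - 1) S m p (p (j+1)) (by omega) (fun r hr => hne r (by omega))
            hprefB (fun r hr => hm r (by omega)) (fun r hr => hp r (by omega))
            (by intro r hr; have := hpB r (by omega); omega)
            (fun r hr => hch r (by omega))
            (by have := hpB (j+1) le_rfl; omega)
        set U : ℕ → Finset ℕ := fun r => if r = j + 2 then {B} else U₀ r with hU
        have hU1 : ∀ r, r ≠ j + 2 → U r = U₀ r := fun r h => by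
          simp only [hU]; rw [if_neg h]
        have hU2 : U (j+2) = {B} := by simp [hU]
        refine ⟨U, ?_, ?_, ?_, ?_, ?_, ?_, ?_⟩
        · intro r hr
          by_cases h : r = j + 2
          · rw [h, hU2]; exact ⟨B, Finset.mem_singleton_self _⟩
          · rw [hU1 r h]; exact hU0ne r (by omega)
        · intro r hr a ha
          by_cases h : r = j + 2
          · rw [h, hU2, Finset.mem_singleton] at ha; omega
          · rw [hU1 r h] at ha
            have := hU0bd r (by omega) a ha; omega
        · intro r hr a ha
          rw [hU1 r (by omega)] at ha
          by_cases h : r = j + 1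
          · subst h
            have hBm : B ≤ m (j+1) :=
              hm (j+1) le_rfl B (hSisingle ▸ Finset.mem_singleton_self B)
            have := hU0bd (j+1) le_rfl a ha
            omega
          · exact hU0m r (by omega) a ha
        · intro r hr a ha
          rw [hU1 r (by omega)] at ha
          by_cases h : r = j + 1
          · subst h
            have h6 := hU0q a ha
            have h7 := hp (j+1) le_rfl B (hSisingle ▸ Finset.mem_singleton_self B)
            omega
          · exact hU0p r (by omega) a ha
        · intro a ha
          rw [show j + 1 + 1 = j + 2 by omega, hU2, Finset.mem_singleton] at ha
          omega
        · intro r hr a ha b hb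
          by_cases h : r + 1 = j + 2
          · have hr' : r = j + 1 := by omega
            rw [h, hU2, Finset.mem_singleton] at hb
            rw [hU1 r (by omega), hr'] at ha
            have := hU0bd (j+1) le_rfl a ha
            omega
          · rw [hU1 _ h] at hb
            rw [hU1 r (by omega)] at ha
            exact hU0ch r (by omega) a ha b hb
        · rw [Finset.sum_range_succ (fun r => (S r).card),
            Finset.sum_range_succ (fun r => (U r).card)]
          have e1 : ∑ r ∈ Finset.range (j+2), (U r).card
              = ∑ r ∈ Finset.range (j+2), (U₀ r).card := by
            refine Finset.sum_congr rfl fun r hr => ?_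
            rw [Finset.mem_range] at hr
            rw [hU1 r (by omega)]
          rw [e1, show j + 1 + 1 = j + 2 by omega, hU2, Finset.card_singleton,
            hSisingle, Finset.card_singleton]
          omega

section Step
variable (lam : ℕ → ℕ) (L n i : ℕ)

/-- the shrunken shape -/
def shr : ℕ → ℕ := fun r => if r = i + 1 then lam i - 1 else lam r

lemma mergeStep (hP : IsPartitionOf lam L) (hiL : i + 1 < L)
    (hk : lam (i+1) = lam i) (htop : lam (i+2) < lam i) (T : SVT lam n) :
    ∃ T' : SVT (shr lam i) n, tabDeg (shr lam i) L T'.T = tabDeg lam L T.T := by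
  set k := lam i with hkk
  have hkpos : 0 < k := hP.2.1 i (by omega)
  have hbox1 : YBox lam i (k-1) := by show k - 1 < lam i; omega
  have hbox2 : YBox lam (i+1) (k-1) := by show k - 1 < lam (i+1); omega
  set A := T.T (i, k-1) with hA
  set B := T.T (i+1, k-1) with hB
  have hAne : A.Nonempty := T.nonempty i (k-1) hbox1
  have hBne : B.Nonempty := T.nonempty (i+1) (k-1) hbox2
  have hAB : ∀ a ∈ A, ∀ b ∈ B, a < b := T.col i (k-1) hbox1 hbox2
  have hdisj : Disjoint A B := by
    rw [Finset.disjoint_left]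
    intro a ha hb
    exact absurd (hAB a ha a hb) (lt_irrefl a)
  -- shape facts
  have hshr : ∀ r, r ≠ i + 1 → shr lam i r = lam r := fun r h => by
    simp only [shr]; rw [if_neg h]
  have hshr2 : shr lam i (i+1) = k - 1 := by
    show (if i + 1 = i + 1 then lam i - 1 else lam (i+1)) = k - 1
    rw [if_pos rfl]
  have hble : ∀ r j, YBox (shr lam i) r j → YBox lam r j := by
    intro r j hb
    by_cases h : r = i + 1
    · subst h; rw [show YBox (shr lam i) (i+1) j ↔ j < k - 1 from by rw [YBox, hshr2]] at hb
      show j < lam (i+1); omega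
    · rwa [YBox, hshr r h] at hb
  set T' : ℕ × ℕ → Finset ℕ := fun x => if x = (i, k-1) then A ∪ B else T.T x with hT'
  have hT'1 : ∀ x, x ≠ (i, k-1) → T' x = T.T x := fun x h => by
    simp only [hT']; rw [if_neg h]
  have hT'2 : T' (i, k-1) = A ∪ B := by
    show (if ((i : ℕ), k-1) = ((i : ℕ), k-1) then A ∪ B else T.T (i, k-1)) = A ∪ B
    rw [if_pos rfl]
  refine ⟨⟨T', ?_, ?_, ?_, ?_⟩, ?_⟩
  · -- nonempty
    intro r j hb
    by_cases h : (r, j) = ((i : ℕ), k-1)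
    · rw [h, hT'2]; exact Finset.Nonempty.mono Finset.subset_union_left hAne
    · rw [hT'1 _ h]; exact T.nonempty r j (hble r j hb)
  · -- bounded
    intro r j hb a ha
    by_cases h : (r, j) = ((i : ℕ), k-1)
    · rw [h, hT'2, Finset.mem_union] at ha
      rcases ha with ha | ha
      · exact T.bounded i (k-1) hbox1 a ha
      · exact T.bounded (i+1) (k-1) hbox2 a ha
    · rw [hT'1 _ h] at ha; exact T.bounded r j (hble r j hb) a ha
  · -- row
    intro r j hb1 hb2 a ha b hbmem
    have hb1' := hble r j hb1
    have hb2' := hble r (j+1) hb2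
    by_cases h2 : (r, j+1) = ((i : ℕ), k-1)
    · -- right box is the union
      have hri : r = i ∧ j + 1 = k - 1 := by
        constructor <;> [exact congrArg Prod.fst h2; exact congrArg Prod.snd h2]
      rw [h2, hT'2, Finset.mem_union] at hbmem
      have hj : (r, j) ≠ ((i : ℕ), k-1) := by
        intro hcon
        have := congrArg Prod.snd hcon
        simp at this; omega
      rw [hT'1 _ hj] at ha
      rcases hbmem with hbm | hbm
      · exact T.row r j hb1' (by rw [hri.1, hri.2]; exact hbox1) a ha b
          (by rw [h2]; exact hbm)
      · -- b in upper part: a ≤ c < b for c ∈ A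
        obtain ⟨c, hc⟩ := hAne
        have h5 : a ≤ c := T.row r j hb1' (by rw [hri.1, hri.2]; exact hbox1) a ha c
          (by rw [h2]; exact hc)
        have h6 : c < b := hAB c hc b hbm
        omega
    · by_cases h1 : (r, j) = ((i : ℕ), k-1)
      · -- left box is union; right box (i, k) would need k < shr lam i i = k: impossible
        exfalso
        have hri : r = i ∧ j = k - 1 := by
          constructor <;> [exact congrArg Prod.fst h1; exact congrArg Prod.snd h1]
        have : j + 1 < shr lam i r := hb2
        rw [hshr r (by omega), hri.1] at this
        omega
      · rw [hT'1 _ h1] at ha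
        rw [hT'1 _ h2] at hbmem
        exact T.row r j hb1' hb2' a ha b hbmem
  · -- col
    intro r j hb1 hb2 a ha b hbmem
    have hb1' := hble r j hb1
    have hb2' := hble (r+1) j hb2
    by_cases h2 : ((r+1 : ℕ), j) = ((i : ℕ), k-1)
    · have hri : r + 1 = i ∧ j = k - 1 := by
        constructor <;> [exact congrArg Prod.fst h2; exact congrArg Prod.snd h2]
      rw [h2, hT'2, Finset.mem_union] at hbmem
      have hj : ((r : ℕ), j) ≠ ((i : ℕ), k-1) := by
        intro hcon
        have := congrArg Prod.fst hcon
        simp at this; omega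
      rw [hT'1 _ hj] at ha
      rcases hbmem with hbm | hbm
      · exact T.col r j hb1' (by rw [hri.1, hri.2]; exact hbox1) a ha b
          (by rw [h2]; exact hbm)
      · obtain ⟨c, hc⟩ := hAne
        have h5 : a < c := T.col r j hb1' (by rw [hri.1, hri.2]; exact hbox1) a ha c
          (by rw [h2]; exact hc)
        have h6 : c < b := hAB c hc b hbm
        omega
    · by_cases h1 : ((r : ℕ), j) = ((i : ℕ), k-1)
      · -- box above (i, k-1) in shr: (i+1, k-1) with shr = k-1: impossible
        exfalso
        have hri : r = i ∧ j = k - 1 := by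
          constructor <;> [exact congrArg Prod.fst h1; exact congrArg Prod.snd h1]
        have : j < shr lam i (r+1) := hb2
        rw [hri.1] at this
        rw [hshr2] at this
        omega
      · rw [hT'1 _ h1] at ha
        rw [hT'1 _ h2] at hbmem
        exact T.col r j hb1' hb2' a ha b hbmem
  · -- degree equality
    show tabDeg (shr lam i) L T' = tabDeg lam L T.T
    unfold tabDeg
    have key : ∀ r, r < L →
        (∑ j ∈ Finset.range (shr lam i r), (T' (r, j)).card)
          + (if r = i + 1 then B.card else 0)
        = (∑ j ∈ Finset.range (lam r), (T.T (r, j)).card)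
          + (if r = i then B.card else 0) := by
      intro r hr
      by_cases hri : r = i
      · subst hri
        rw [if_neg (by omega), if_pos rfl, hshr r (by omega)]
        have e1 : (T.T (r, k-1)).card + ∑ j ∈ Finset.range (lam r), (T' (r, j)).card
            = (T' (r, k-1)).card + ∑ j ∈ Finset.range (lam r), (T.T (r, j)).card :=
          sum_except (show k - 1 < lam r by omega)
            (fun j => (T.T (r, j)).card) (fun j => (T' (r, j)).card)
            (fun j hj hjne => (congrArg Finset.card (hT'1 (r, j) (by simp [hjne]))).symm)
        have e2 : (T' (r, k-1)).card = A.card + B.card := by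
          rw [hT'2, Finset.card_union_of_disjoint hdisj]
        have e3 : (T.T (r, k-1)).card = A.card := rfl
        omega
      · by_cases hri1 : r = i + 1
        · subst hri1
          rw [if_pos rfl, if_neg (by omega), hshr2]
          have e4 : ∑ j ∈ Finset.range ((k-1)+1), (T.T (i+1, j)).card
              = (∑ j ∈ Finset.range (k-1), (T.T (i+1, j)).card) + (T.T (i+1, k-1)).card :=
            Finset.sum_range_succ _ _
          have e4' : lam (i+1) = (k-1)+1 := by omega
          have e5 : ∑ j ∈ Finset.range (k-1), (T' (i+1, j)).card
              = ∑ j ∈ Finset.range (k-1), (T.T (i+1, j)).card := by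
            refine Finset.sum_congr rfl fun j hj => ?_
            rw [hT'1 (i+1, j) (by simp)]
          rw [e5, e4', e4]
          have : (T.T (i+1, k-1)).card = B.card := rfl
          omega
        · rw [if_neg hri1, if_neg hri, hshr r hri1]
          have e6 : ∑ j ∈ Finset.range (lam r), (T' (r, j)).card
              = ∑ j ∈ Finset.range (lam r), (T.T (r, j)).card := by
            refine Finset.sum_congr rfl fun j hj => ?_
            rw [hT'1 (r, j) (by simp [hri])]
          omega
    have hsum := Finset.sum_congr rfl (fun r (hr : r ∈ Finset.range L) =>
      key r (Finset.mem_range.1 hr))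
    rw [Finset.sum_add_distrib, Finset.sum_add_distrib] at hsum
    have hi1 : ∑ r ∈ Finset.range L, (if r = i + 1 then B.card else 0) = B.card := by
      rw [Finset.sum_ite_eq' (Finset.range L) (i+1) (fun _ => B.card),
        if_pos (Finset.mem_range.2 (by omega))]
    have hi2 : ∑ r ∈ Finset.range L, (if r = i then B.card else 0) = B.card := by
      rw [Finset.sum_ite_eq' (Finset.range L) i (fun _ => B.card),
        if_pos (Finset.mem_range.2 (by omega))]
    omega
end Step

section Ext
variable (lam : ℕ → ℕ) (L n i : ℕ)

lemma extendStep (hP : IsPartitionOf lam L) (hiL : i + 1 < L)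
    (hk : lam (i+1) = lam i) (htop : lam (i+2) < lam i) (hn : L ≤ n)
    (T' : SVT (shr lam i) n) :
    ∃ T : SVT lam n, tabDeg (shr lam i) L T'.T ≤ tabDeg lam L T.T := by
  set k := lam i with hkk
  have hkpos : 0 < k := hP.2.1 i (by omega)
  have hshr : ∀ r, r ≠ i + 1 → shr lam i r = lam r := fun r h => by
    simp only [shr]; rw [if_neg h]
  have hshr2 : shr lam i (i+1) = k - 1 := by
    show (if i + 1 = i + 1 then lam i - 1 else lam (i+1)) = k - 1
    rw [if_pos rfl]
  have hanti : ∀ r, r ≤ i → k ≤ lam r := fun r hr => part_anti_s7 hP r i hr (by omega)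
  have hboxS : ∀ r, r ≤ i → YBox (shr lam i) r (k-1) := by
    intro r hr
    show k - 1 < shr lam i r
    rw [hshr r (by omega)]
    have := hanti r hr; omega
  -- data for chainExt
  set S : ℕ → Finset ℕ := fun r => T'.T (r, k-1) with hS
  set m : ℕ → ℕ := fun r =>
    if h : k < shr lam i r then (T'.T (r, k)).min' (T'.nonempty r k h) else n with hmdef
  set p : ℕ → ℕ := fun r =>
    if h : 2 ≤ k ∧ k - 2 < shr lam i r then
      (T'.T (r, k-2)).max' (T'.nonempty r (k-2) h.2) else 0 with hpdef
  have hSr : ∀ r, S r = T'.T (r, k-1) := fun r => rfl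
  have hm_pos : ∀ r (h : k < shr lam i r),
      m r = (T'.T (r, k)).min' (T'.nonempty r k h) := fun r h => by
    simp only [hmdef]; rw [dif_pos h]
  have hm_neg : ∀ r, ¬ k < shr lam i r → m r = n := fun r h => by
    simp only [hmdef]; rw [dif_neg h]
  have hp_pos : ∀ r (h : 2 ≤ k ∧ k - 2 < shr lam i r),
      p r = (T'.T (r, k-2)).max' (T'.nonempty r (k-2) h.2) := fun r h => by
    simp only [hpdef]; rw [dif_pos h]
  have hp_neg : ∀ r, ¬ (2 ≤ k ∧ k - 2 < shr lam i r) → p r = 0 := fun r h => by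
    simp only [hpdef]; rw [dif_neg h]
  have hpcond : ∀ r, r ≤ i + 1 → 2 ≤ k → (2 ≤ k ∧ k - 2 < shr lam i r) := by
    intro r hr h2
    refine ⟨h2, ?_⟩
    by_cases h : r = i + 1
    · rw [h, hshr2]; omega
    · rw [hshr r h]
      have := hanti r (by omega); omega
  have hpmem : ∀ r (h : 2 ≤ k ∧ k - 2 < shr lam i r), p r ∈ T'.T (r, k-2) := by
    intro r h
    rw [hp_pos r h]
    exact (T'.T (r, k-2)).max'_mem _
  have hple : ∀ r (h : 2 ≤ k ∧ k - 2 < shr lam i r), ∀ a ∈ T'.T (r, k-2), a ≤ p r := by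
    intro r h a ha
    rw [hp_pos r h]
    exact (T'.T (r, k-2)).le_max' a ha
  -- p is strictly increasing up to i+1 (when k ≥ 2)
  have hpstep : 2 ≤ k → ∀ r, r ≤ i → p r < p (r+1) := by
    intro h2 r hr
    have hc1 := hpcond r (by omega) h2
    have hc2 := hpcond (r+1) (by omega) h2
    exact T'.col r (k-2) hc1.2 hc2.2 (p r) (hpmem r hc1) (p (r+1)) (hpmem (r+1) hc2)
  have hptop : p (i+1) ≤ n := by
    by_cases h2 : 2 ≤ k
    · have hc := hpcond (i+1) le_rfl h2
      exact (T'.bounded (i+1) (k-2) hc.2 (p (i+1)) (hpmem (i+1) hc)).2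
    · rw [hp_neg (i+1) (fun hcon => h2 hcon.1)]; omega
  have hpB : ∀ r, r ≤ i → p r + (i + 1 - r) ≤ n := by
    intro r hr
    by_cases h2 : 2 ≤ k
    · have haux : ∀ t r', r' + t ≤ i + 1 → p r' + t ≤ p (r' + t) := by
        intro t
        induction t with
        | zero => intro r' _; simp
        | succ t ih =>
          intro r' hr'
          have h3 := ih r' (by omega)
          have h4 := hpstep h2 (r' + t) (by omega)
          have : r' + (t + 1) = (r' + t) + 1 := by omega
          rw [this]
          omega
      have h5 := haux (i + 1 - r) r (by omega)
      rw [show r + (i + 1 - r) = i + 1 from by omega] at h5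
      omega
    · rw [hp_neg r (fun hcon => h2 hcon.1)]; omega
  -- chainExt hypotheses
  have hchain := chainExt i n S m p (p (i+1)) (by omega)
    (fun r hr => T'.nonempty r (k-1) (hboxS r hr))
    (fun r hr a ha => T'.bounded r (k-1) (hboxS r hr) a ha)
    ?_ ?_ hpB
    (fun r hr a ha b hb => T'.col r (k-1) (hboxS r (by omega)) (hboxS (r+1) (by omega)) a ha b hb)
    hptop
  case refine_1 =>
    -- a ≤ m r for a ∈ S r
    intro r hr a ha
    by_cases h : k < shr lam i r
    · rw [hm_pos r h]
      have hrow := T'.row r (k-1) (hboxS r hr) (by show k - 1 + 1 < shr lam i r; omega)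
      rw [show k - 1 + 1 = k from by omega] at hrow
      exact hrow a ha ((T'.T (r, k)).min' (T'.nonempty r k h))
        ((T'.T (r, k)).min'_mem _)
    · rw [hm_neg r h]
      exact (T'.bounded r (k-1) (hboxS r hr) a ha).2
  case refine_2 =>
    -- p r ≤ a for a ∈ S r
    intro r hr a ha
    by_cases h2 : 2 ≤ k
    · have hc := hpcond r (by omega) h2
      have h9 : k - 1 < shr lam i r := hboxS r hr
      have hrow := T'.row r (k-2) hc.2 (show k - 2 + 1 < shr lam i r from by omega)
      rw [show k - 2 + 1 = k - 1 from by omega] at hrow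
      exact hrow (p r) (hpmem r hc) a ha
    · rw [hp_neg r (fun hcon => h2 hcon.1)]; omega
  obtain ⟨U, hUne, hUbd, hUm, hUp, hUq, hUch, hUsum⟩ := hchain
  -- the extended tableau
  set T : ℕ × ℕ → Finset ℕ :=
    fun x => if x.2 = k - 1 ∧ x.1 ≤ i + 1 then U x.1 else T'.T x with hT
  have hT1 : ∀ x : ℕ × ℕ, ¬ (x.2 = k - 1 ∧ x.1 ≤ i + 1) → T x = T'.T x := fun x h => by
    simp only [hT]; rw [if_neg h]
  have hT2 : ∀ r, r ≤ i + 1 → T (r, k-1) = U r := fun r hr => by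
    simp [hT, hr]
  -- transfer of boxes from lam to shr
  have htrans : ∀ r j, YBox lam r j → ¬ (r = i + 1 ∧ j = k - 1) → YBox (shr lam i) r j := by
    intro r j hb hno
    by_cases h : r = i + 1
    · subst h
      have hb' : j < k := by have : j < lam (i+1) := hb; omega
      show j < shr lam i (i+1)
      rw [hshr2]
      rcases Nat.lt_or_ge j (k-1) with h1 | h1
      · exact h1
      · exfalso; exact hno ⟨rfl, by omega⟩
    · show j < shr lam i r
      rw [hshr r h]; exact hb
  refine ⟨⟨T, ?_, ?_, ?_, ?_⟩, ?_⟩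
  · -- nonempty
    intro r j hb
    by_cases h : j = k - 1 ∧ r ≤ i + 1
    · rw [h.1, hT2 r h.2]; exact hUne r h.2
    · rw [hT1 (r, j) h]
      refine T'.nonempty r j (htrans r j hb ?_)
      intro hcon
      exact h ⟨hcon.2, by omega⟩
  · -- bounded
    intro r j hb a ha
    by_cases h : j = k - 1 ∧ r ≤ i + 1
    · rw [h.1, hT2 r h.2] at ha; exact hUbd r h.2 a ha
    · rw [hT1 (r, j) h] at ha
      refine T'.bounded r j (htrans r j hb ?_) a ha
      intro hcon
      exact h ⟨hcon.2, by omega⟩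
  · -- row
    intro r j hb1 hb2 a ha b hbm
    by_cases h2 : j + 1 = k - 1 ∧ r ≤ i + 1
    · -- right box is a U-box; left box is (r, k-2), unmodified
      have hk2 : 2 ≤ k := by omega
      have hcnd := hpcond r (by omega) hk2
      have hj : j = k - 2 := by omega
      rw [h2.1, hT2 r h2.2] at hbm
      rw [hT1 (r, j) (by intro hcon; omega)] at ha
      have h5 : a ≤ p r := by
        rw [hj] at ha
        exact hple r hcnd a ha
      have h6 : p r ≤ b := by
        rcases Nat.lt_or_ge r (i+1) with h7 | h7
        · exact hUp r (by omega) b hbm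
        · have hre : r = i + 1 := by omega
          subst hre
          exact hUq b hbm
      omega
    · by_cases h1 : j = k - 1 ∧ r ≤ i + 1
      · -- left box is U r; right box is (r, k), so k < lam r, forcing r ≤ i
        have hjk : j = k - 1 := h1.1
        have hbk : k < lam r := by
          have : j + 1 < lam r := hb2
          omega
        have hri : r ≤ i := by
          rcases Nat.lt_or_ge r (i+1) with h7 | h7
          · omega
          · exfalso
            have h8 : r = i + 1 := by omega
            rw [h8, hk] at hbk
            omega
        have hmlt : k < shr lam i r := by
          rw [hshr r (by omega)]; exact hbk
        rw [hjk, hT2 r h1.2] at ha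
        rw [hT1 (r, j+1) (by intro hcon; omega)] at hbm
        have h5 : a ≤ m r := hUm r hri a ha
        have h6 : m r ≤ b := by
          rw [hm_pos r hmlt]
          refine Finset.min'_le _ b ?_
          rw [show j + 1 = k from by omega] at hbm
          exact hbm
        omega
      · -- neither box modified
        rw [hT1 (r, j) h1] at ha
        rw [hT1 (r, j+1) h2] at hbm
        refine T'.row r j (htrans r j hb1 ?_) (htrans r (j+1) hb2 ?_) a ha b hbm
        · intro hcon; exact h1 ⟨hcon.2, by omega⟩
        · intro hcon; exact h2 ⟨hcon.2, by omega⟩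
  · -- col
    intro r j hb1 hb2 a ha b hbm
    by_cases hj : j = k - 1
    · subst hj
      by_cases h2 : r + 1 ≤ i + 1
      · rw [hT2 r (by omega)] at ha
        rw [hT2 (r+1) h2] at hbm
        exact hUch r (by omega) a ha b hbm
      · by_cases h1 : r ≤ i + 1
        · -- r = i+1, box above would be (i+2, k-1): impossible
          exfalso
          have hr8 : r = i + 1 := by omega
          have h9 : k - 1 < lam (r+1) := hb2
          rw [hr8] at h9
          have h10 : lam (i+1+1) = lam (i+2) := congrArg lam (by omega)
          omega
        · -- r > i+1 : both boxes unmodified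
          rw [hT1 (r, k-1) (by intro hcon; omega)] at ha
          rw [hT1 (r+1, k-1) (by intro hcon; omega)] at hbm
          refine T'.col r (k-1) (htrans r (k-1) hb1 ?_) (htrans (r+1) (k-1) hb2 ?_) a ha b hbm
          · intro hcon; omega
          · intro hcon; omega
    · rw [hT1 (r, j) (by intro hcon; exact hj hcon.1)] at ha
      rw [hT1 (r+1, j) (by intro hcon; exact hj hcon.1)] at hbm
      refine T'.col r j (htrans r j hb1 ?_) (htrans (r+1) j hb2 ?_) a ha b hbm
      · intro hcon; exact hj hcon.2
      · intro hcon; exact hj hcon.2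
  · -- degree inequality
    show tabDeg (shr lam i) L T'.T ≤ tabDeg lam L T
    unfold tabDeg
    have key : ∀ r, r < L →
        (∑ j ∈ Finset.range (lam r), (T (r, j)).card) + (if r ≤ i then (S r).card else 0)
        = (∑ j ∈ Finset.range (shr lam i r), (T'.T (r, j)).card)
          + (if r ≤ i + 1 then (U r).card else 0) := by
      intro r hr
      rcases Nat.lt_or_ge r (i+1) with hri | hri
      · -- r ≤ i
        have hri' : r ≤ i := by omega
        rw [if_pos hri', if_pos (by omega), hshr r (by omega)]
        have e1 : (T'.T (r, k-1)).card + ∑ j ∈ Finset.range (lam r), (T (r, j)).card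
            = (T (r, k-1)).card + ∑ j ∈ Finset.range (lam r), (T'.T (r, j)).card := by
          refine sum_except (show k - 1 < lam r from by have := hanti r hri'; omega)
            (fun j => (T'.T (r, j)).card) (fun j => (T (r, j)).card)
            (fun j hj hjne => (congrArg Finset.card (hT1 (r, j)
              (by intro hcon; exact hjne hcon.1))).symm)
        have e2 : (T (r, k-1)).card = (U r).card :=
          congrArg Finset.card (hT2 r (by omega))
        have e3 : (S r).card = (T'.T (r, k-1)).card := rfl
        omega
      · rcases Nat.eq_or_lt_of_le hri with hri1 | hri2
        · -- r = i + 1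
          have hr8 : r = i + 1 := hri1.symm
          subst hr8
          rw [if_neg (by omega), if_pos le_rfl, hshr2]
          have e4 : ∑ j ∈ Finset.range ((k-1)+1), (T ((i+1 : ℕ), j)).card
              = (∑ j ∈ Finset.range (k-1), (T ((i+1 : ℕ), j)).card) + (T ((i+1:ℕ), k-1)).card :=
            Finset.sum_range_succ _ _
          have e4' : lam (i+1) = (k-1)+1 := by omega
          have e5 : ∑ j ∈ Finset.range (k-1), (T ((i+1:ℕ), j)).card
              = ∑ j ∈ Finset.range (k-1), (T'.T (i+1, j)).card := by
            refine Finset.sum_congr rfl fun j hj => ?_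
            rw [Finset.mem_range] at hj
            rw [hT1 (i+1, j) (by intro hcon; omega)]
          have e6 : (T ((i+1:ℕ), k-1)).card = (U (i+1)).card :=
            congrArg Finset.card (hT2 (i+1) le_rfl)
          rw [e4', e4, e5, e6]
          omega
        · -- r > i + 1
          rw [if_neg (by omega), if_neg (by omega), hshr r (by omega)]
          have e7 : ∑ j ∈ Finset.range (lam r), (T (r, j)).card
              = ∑ j ∈ Finset.range (lam r), (T'.T (r, j)).card := by
            refine Finset.sum_congr rfl fun j hj => ?_
            rw [hT1 (r, j) (by intro hcon; omega)]
          omega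
    have hsum := Finset.sum_congr rfl (fun r (hr : r ∈ Finset.range L) =>
      key r (Finset.mem_range.1 hr))
    rw [Finset.sum_add_distrib, Finset.sum_add_distrib] at hsum
    have hindS : ∑ r ∈ Finset.range L, (if r ≤ i then (S r).card else 0)
        = ∑ r ∈ Finset.range (i+1), (S r).card := by
      rw [← Finset.sum_subset (Finset.range_subset_range.2 (show i + 1 ≤ L from by omega))
        (fun x hx hx' => by
          rw [Finset.mem_range] at hx
          rw [Finset.mem_range] at hx'
          rw [if_neg (by omega)])]
      refine Finset.sum_congr rfl fun r hr => ?_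
      rw [Finset.mem_range] at hr
      rw [if_pos (by omega)]
    have hindU : ∑ r ∈ Finset.range L, (if r ≤ i + 1 then (U r).card else 0)
        = ∑ r ∈ Finset.range (i+2), (U r).card := by
      rw [← Finset.sum_subset (Finset.range_subset_range.2 (show i + 2 ≤ L from by omega))
        (fun x hx hx' => by
          rw [Finset.mem_range] at hx
          rw [Finset.mem_range] at hx'
          rw [if_neg (by omega)])]
      refine Finset.sum_congr rfl fun r hr => ?_
      rw [Finset.mem_range] at hr
      rw [if_pos (by omega)]
    rw [hindS, hindU] at hsum
    omega
end Ext


private lemma key : ∀ (s : ℕ) (lam : ℕ → ℕ) (L : ℕ), (∑ r ∈ Finset.range L, lam r) = s →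
    IsPartitionOf lam L →
    ∀ (mu : ℕ → ℕ) (ℓ : ℕ), IsLargestStrictPartitionIn mu lam ℓ → ∀ n, L ≤ n →
    (∀ T : SVT lam n, ∃ S : SVT mu n, tabDeg mu ℓ S.T = tabDeg lam L T.T) ∧
      degG lam L n = degG mu ℓ n := by
  intro s
  induction s using Nat.strong_induction_on with
  | _ s IH =>
  intro lam L hs hP mu ℓ hmu n hn
  classical
  by_cases hstrict : ∀ r, r + 1 < L → lam (r+1) < lam r
  · -- lam is already strict: mu = lam
    have hmueq : mu = lam := funext fun r => le_antisymm (hmu.2.1 r)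
      (hmu.2.2 lam L ⟨hstrict, hP.2.1, hP.2.2⟩ (fun _ => le_rfl) r)
    have hl : ℓ = L := by
      by_contra hne
      rcases Nat.lt_or_ge ℓ L with h | h
      · have h1 := hmu.1.2.2 ℓ le_rfl
        have h2 := hP.2.1 ℓ h
        rw [hmueq] at h1; omega
      · have h3 : L < ℓ := by omega
        have h1 := hmu.1.2.1 L h3
        have h2 := hP.2.2 L le_rfl
        rw [hmueq] at h1; omega
    subst hmueq; subst hl
    exact ⟨fun T => ⟨T, rfl⟩, rfl⟩
  · -- non-strict step
    push_neg at hstrict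
    obtain ⟨r0, hr0L, hr0⟩ := hstrict
    have hr0eq : lam (r0 + 1) = lam r0 := le_antisymm (hP.1 r0 hr0L) hr0
    set P : ℕ → Prop := fun r => r + 1 < L ∧ lam (r+1) = lam r with hPdef
    set i := Nat.findGreatest P L with hidef
    have hPi : P i := Nat.findGreatest_spec (P := P) (show r0 ≤ L by omega) ⟨hr0L, hr0eq⟩
    have hiL : i + 1 < L := hPi.1
    have hk : lam (i+1) = lam i := hPi.2
    have hipos : 0 < lam i := hP.2.1 i (by omega)
    have htop : lam (i+2) < lam i := by
      by_cases h : i + 2 < L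
      · have hnP : ¬ P (i+1) :=
          Nat.findGreatest_is_greatest (Nat.lt_succ_self i) (by omega)
        have h1 : lam (i+1+1) ≠ lam (i+1) := fun hcon => hnP ⟨by omega, hcon⟩
        have h2 : lam (i+1+1) ≤ lam (i+1) := hP.1 (i+1) (by omega)
        have h3 : lam (i+1+1) = lam (i+2) := congrArg lam (by omega)
        omega
      · have h4 : lam (i+2) = 0 := hP.2.2 _ (by omega)
        omega
    have hshr : ∀ r, r ≠ i + 1 → shr lam i r = lam r := fun r h => by
      simp only [shr]; rw [if_neg h]
    have hshr2 : shr lam i (i+1) = lam i - 1 := by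
      show (if i + 1 = i + 1 then lam i - 1 else lam (i+1)) = lam i - 1
      rw [if_pos rfl]
    -- package the new length
    obtain ⟨L', hP', hL'L, h0', hmeas⟩ :
        ∃ L', IsPartitionOf (shr lam i) L' ∧ L' ≤ L ∧
          (∀ r, L' ≤ r → shr lam i r = 0) ∧
          (∑ r ∈ Finset.range L', shr lam i r) < ∑ r ∈ Finset.range L, lam r := by
      by_cases hk1 : lam i = 1
      · -- top row disappears; L = i + 2
        have hLi : L = i + 2 := by
          by_contra hco
          have h5 : i + 2 < L := by omega
          have h6 := hP.2.1 (i+2) h5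
          omega
        refine ⟨i + 1, ⟨?_, ?_, ?_⟩, by omega, ?_, ?_⟩
        · intro r hr
          rw [hshr (r+1) (by omega), hshr r (by omega)]
          exact hP.1 r (by omega)
        · intro r hr
          rw [hshr r (by omega)]
          exact hP.2.1 r (by omega)
        · intro r hr
          by_cases h : r = i + 1
          · rw [h, hshr2]; omega
          · rw [hshr r h]; exact hP.2.2 r (by omega)
        · intro r hr
          by_cases h : r = i + 1
          · rw [h, hshr2]; omega
          · rw [hshr r h]; exact hP.2.2 r (by omega)
        · have e1 : ∑ r ∈ Finset.range (i+1), shr lam i r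
              = ∑ r ∈ Finset.range (i+1), lam r := by
            refine Finset.sum_congr rfl fun r hr => ?_
            rw [Finset.mem_range] at hr
            exact hshr r (by omega)
          rw [e1, hLi]
          have e2 : ∑ r ∈ Finset.range (i+2), lam r
              = (∑ r ∈ Finset.range (i+1), lam r) + lam (i+1) := Finset.sum_range_succ _ _
          omega
      · -- length stays L
        refine ⟨L, ⟨?_, ?_, ?_⟩, le_rfl, ?_, ?_⟩
        · intro r hr
          by_cases h1 : r + 1 = i + 1
          · have hri : r = i := by omega
            subst hri
            rw [hshr2, hshr i (by omega)]
            omega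
          · by_cases h2 : r = i + 1
            · subst h2
              rw [hshr (i+1+1) (by omega), hshr2]
              have h5 : lam (i+1+1) = lam (i+2) := congrArg lam (by omega)
              omega
            · rw [hshr (r+1) h1, hshr r h2]
              exact hP.1 r hr
        · intro r hr
          by_cases h : r = i + 1
          · rw [h, hshr2]; omega
          · rw [hshr r h]; exact hP.2.1 r hr
        · intro r hr
          rw [hshr r (by omega)]
          exact hP.2.2 r hr
        · intro r hr
          rw [hshr r (by omega)]
          exact hP.2.2 r hr
        · refine Finset.sum_lt_sum (fun r hr => ?_) ⟨i+1, Finset.mem_range.2 (by omega), ?_⟩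
          · by_cases h : r = i + 1
            · rw [h, hshr2]; omega
            · rw [hshr r h]
          · rw [hshr2]; omega
    have htr : ∀ TT : ℕ × ℕ → Finset ℕ,
        tabDeg (shr lam i) L TT = tabDeg (shr lam i) L' TT :=
      fun TT => tabDeg_trunc _ L L' hL'L h0' TT
    -- mu is still the largest strict subpartition
    have hmu' : IsLargestStrictPartitionIn mu (shr lam i) ℓ := by
      refine ⟨hmu.1, ?_, ?_⟩
      · intro r
        by_cases h : r = i + 1
        · rw [h, hshr2]
          by_cases hl : i + 1 < ℓ
          · have h5 : mu (i+1) < mu i := hmu.1.1 i hl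
            have h6 : mu i ≤ lam i := hmu.2.1 i
            omega
          · have h7 : mu (i+1) = 0 := hmu.1.2.2 (i+1) (by omega)
            omega
        · rw [hshr r h]; exact hmu.2.1 r
      · intro ν mm hν hsub
        refine hmu.2.2 ν mm hν (fun r => le_trans (hsub r) ?_)
        by_cases h : r = i + 1
        · rw [h, hshr2, ← hk]; omega
        · rw [hshr r h]
    have hL'n : L' ≤ n := le_trans hL'L hn
    obtain ⟨part1', part2'⟩ := IH (∑ r ∈ Finset.range L', shr lam i r)
      (by omega) (shr lam i) L' rfl hP' mu ℓ hmu' n hL'n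
    have hpos : ∀ r, lam r ≠ 0 → r < n := by
      intro r h0
      have : r < L := by
        by_contra hc
        exact h0 (hP.2.2 r (by omega))
      omega
    have hpos' : ∀ r, shr lam i r ≠ 0 → r < n := by
      intro r h0
      have : r < L' := by
        by_contra hc
        exact h0 (h0' r (by omega))
      omega
    constructor
    · intro T
      obtain ⟨T', hT'⟩ := mergeStep lam L n i hP hiL hk htop T
      obtain ⟨Smu, hSmu⟩ := part1' T'
      refine ⟨Smu, ?_⟩
      rw [hSmu, ← htr T'.T, hT']
    · rw [← part2']
      unfold degG
      apply le_antisymm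
      · apply csSup_le_csSup (degG_set_bdd _ L' n) (degG_set_nonempty lam L n hpos)
        rintro d ⟨T, rfl⟩
        obtain ⟨T', hT'⟩ := mergeStep lam L n i hP hiL hk htop T
        exact ⟨T', by rw [← htr T'.T]; exact hT'⟩
      · apply csSup_le (degG_set_nonempty (shr lam i) L' n hpos')
        rintro d ⟨T'', rfl⟩
        obtain ⟨T, hT⟩ := extendStep lam L n i hP hiL hk htop hn T''
        calc tabDeg (shr lam i) L' T''.T = tabDeg (shr lam i) L T''.T := (htr T''.T).symm
          _ ≤ tabDeg lam L T.T := hT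
          _ ≤ sSup {d | ∃ T : SVT lam n, tabDeg lam L T.T = d} :=
              le_csSup (degG_set_bdd lam L n) ⟨T, rfl⟩


/-- let `lam` be a partition (of length `L`), `mu` the largest strict
partition contained in `lam` (of length `ℓ`), and `n ≥ L`.  Every semistandard
set-valued tableau of shape `lam` with entries in `[1,n]` has the same degree as a
semistandard set-valued tableau whose shape is a strict partition containing `mu` and
contained in `lam`; consequently the maximum degree of set-valued tableaux of shape
`lam` equals the maximum degree of set-valued tableaux of shape `mu`. -/
theorem stmt7 (lam : ℕ → ℕ) (L : ℕ) (hlam : IsPartitionOf lam L)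
    (mu : ℕ → ℕ) (ℓ : ℕ) (hmu : IsLargestStrictPartitionIn mu lam ℓ)
    (n : ℕ) (hn : L ≤ n) :
    (∀ T : SVT lam n, ∃ (nu : ℕ → ℕ) (m : ℕ), IsStrictPartitionOf nu m ∧
        Subpartition mu nu ∧ Subpartition nu lam ∧
        ∃ S : SVT nu n, tabDeg nu m S.T = tabDeg lam L T.T) ∧
      degG lam L n = degG mu ℓ n := by
  obtain ⟨p1, p2⟩ := key (∑ r ∈ Finset.range L, lam r) lam L rfl hlam mu ℓ hmu n hn
  refine ⟨fun T => ?_, p2⟩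
  obtain ⟨S, hS⟩ := p1 T
  exact ⟨mu, ℓ, hmu.1, fun _ => le_rfl, hmu.2.1, S, hS⟩
end

section
/- For any strict partition μ of length ℓ and any n ≥ ℓ, the set-valued tableau of shape μ that fills every non-rightmost box of row i with {i} and the rightmost box of row i with the interval [i,n] has maximum degree among all semistandard set-valued tableaux of shape μ with entries in [1,n], and this maximum degree equals |μ| + ℓn − ℓ(ℓ+1)/2. -/
/-- The maximal tableau `N_{mu,n}`: every non-rightmost box of row `i`
(0-indexed; row `i+1` of the paper) is filled with `{i+1}`, and the rightmost box of
row `i` is filled with the interval `[i+1, n]`. -/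
def Ntab (mu : ℕ → ℕ) (n : ℕ) : ℕ × ℕ → Finset ℕ := fun p =>
  if p.2 + 1 = mu p.1 then Finset.Icc (p.1 + 1) n else {p.1 + 1}

lemma card_le_max_sub_min (s : Finset ℕ) (hs : s.Nonempty) :
    (s.card : ℤ) ≤ (s.max' hs : ℤ) - (s.min' hs : ℤ) + 1 := by
  have hsub : s ⊆ Finset.Icc (s.min' hs) (s.max' hs) := fun x hx =>
    Finset.mem_Icc.mpr ⟨s.min'_le x hx, s.le_max' x hx⟩
  have h1 := Finset.card_le_card hsub
  rw [Nat.card_Icc] at h1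
  have hmm : s.min' hs ≤ s.max' hs := s.min'_le _ (s.max'_mem hs)
  omega

lemma min_lb (mu : ℕ → ℕ) (ℓ n : ℕ) (hmu : IsStrictPartitionOf mu ℓ) (T : SVT mu n) :
    ∀ i j a, YBox mu i j → a ∈ T.T (i, j) → i + 1 ≤ a := by
  intro i
  induction i with
  | zero => intro j a hj ha; exact (T.bounded 0 j hj a ha).1
  | succ i ih =>
    intro j a hj ha
    have hiℓ : i + 1 < ℓ := by
      by_contra h
      have h0 := hmu.2.2 (i + 1) (by omega)
      have : j < mu (i + 1) := hj
      omega
    have hj' : YBox mu i j := lt_trans hj (hmu.1 i hiℓ)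
    obtain ⟨b, hb⟩ := T.nonempty i j hj'
    have h1 := ih j b hj' hb
    have h2 := T.col i j hj' hj b hb a ha
    omega

lemma row_sum_le (mu : ℕ → ℕ) (ℓ n : ℕ) (hmu : IsStrictPartitionOf mu ℓ) (T : SVT mu n)
    (i : ℕ) (hi : i < ℓ) :
    (∑ j ∈ Finset.range (mu i), ((T.T (i, j)).card : ℤ)) ≤ (mu i : ℤ) - 1 + ((n : ℤ) - i) := by
  obtain ⟨k, hk⟩ : ∃ k, mu i = k + 1 := ⟨mu i - 1, by have := hmu.2.1 i hi; omega⟩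
  have h0 : YBox mu i 0 := by have : 0 < mu i := hmu.2.1 i hi; exact this
  have key : ∀ m (hm : m < mu i),
      (∑ j ∈ Finset.range (m + 1), ((T.T (i, j)).card : ℤ)) ≤
        (m : ℤ) + ((T.T (i, m)).max' (T.nonempty i m hm) : ℤ)
          - ((T.T (i, 0)).min' (T.nonempty i 0 h0) : ℤ) + 1 := by
    intro m
    induction m with
    | zero =>
      intro hm
      rw [Finset.sum_range_one]
      have h := card_le_max_sub_min (T.T (i, 0)) (T.nonempty i 0 h0)
      push_cast at h ⊢
      linarith
    | succ m ih =>
      intro hm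
      have hm' : m < mu i := by omega
      have hstep := ih hm'
      rw [Finset.sum_range_succ]
      have hchain : ((T.T (i, m)).max' (T.nonempty i m hm') : ℤ) ≤
          ((T.T (i, m + 1)).min' (T.nonempty i (m + 1) hm) : ℤ) := by
        exact_mod_cast T.row i m hm' hm _ ((T.T (i, m)).max'_mem _) _
          ((T.T (i, m + 1)).min'_mem _)
      have hcard := card_le_max_sub_min (T.T (i, m + 1)) (T.nonempty i (m + 1) hm)
      have hmm : ((T.T (i, m + 1)).min' (T.nonempty i (m + 1) hm) : ℤ) ≤
          ((T.T (i, m + 1)).max' (T.nonempty i (m + 1) hm) : ℤ) := by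
        exact_mod_cast (T.T (i, m + 1)).min'_le _ ((T.T (i, m + 1)).max'_mem _)
      push_cast at hstep hchain hcard ⊢
      linarith
  have hk' : k < mu i := by omega
  have hmax : ((T.T (i, k)).max' (T.nonempty i k hk') : ℤ) ≤ (n : ℤ) := by
    exact_mod_cast (T.bounded i k hk' _ ((T.T (i, k)).max'_mem _)).2
  have hmin : (i : ℤ) + 1 ≤ ((T.T (i, 0)).min' (T.nonempty i 0 h0) : ℤ) := by
    exact_mod_cast min_lb mu ℓ n hmu T i 0 _ h0 ((T.T (i, 0)).min'_mem _)
  have hkey := key k hk'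
  rw [hk]
  push_cast at hkey ⊢
  linarith

lemma Ntab_row_sum (mu : ℕ → ℕ) (n i : ℕ) (hpos : 0 < mu i) (hin : i < n) :
    (∑ j ∈ Finset.range (mu i), ((Ntab mu n (i, j)).card : ℤ)) =
      (mu i : ℤ) - 1 + ((n : ℤ) - i) := by
  obtain ⟨k, hk⟩ : ∃ k, mu i = k + 1 := ⟨mu i - 1, by omega⟩
  rw [hk, Finset.sum_range_succ]
  have h1 : ∀ j ∈ Finset.range k, ((Ntab mu n (i, j)).card : ℤ) = 1 := by
    intro j hj
    simp only [Finset.mem_range] at hj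
    have : ¬ (j + 1 = mu i) := by omega
    simp [Ntab, this]
  rw [Finset.sum_congr rfl h1, Finset.sum_const, Finset.card_range]
  have h2 : (Ntab mu n (i, k)).card = n - i := by
    simp [Ntab, hk, Nat.card_Icc]
  rw [h2]
  have : ((n - i : ℕ) : ℤ) = (n : ℤ) - i := by omega
  rw [this]
  push_cast
  ring

def NtabSVT (mu : ℕ → ℕ) (ℓ n : ℕ) (hmu : IsStrictPartitionOf mu ℓ) (hn : ℓ ≤ n) :
    SVT mu n where
  T := Ntab mu n
  nonempty := by
    intro i j hj
    have hiℓ : i < ℓ := by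
      by_contra h
      have := hmu.2.2 i (by omega)
      have hj' : j < mu i := hj
      omega
    unfold Ntab
    dsimp only
    split
    · exact Finset.nonempty_Icc.mpr (by omega)
    · exact Finset.singleton_nonempty _
  bounded := by
    intro i j hj a ha
    have hiℓ : i < ℓ := by
      by_contra h
      have := hmu.2.2 i (by omega)
      have hj' : j < mu i := hj
      omega
    unfold Ntab at ha
    dsimp only at ha
    split at ha
    · rw [Finset.mem_Icc] at ha; omega
    · rw [Finset.mem_singleton] at ha; omega
  row := by
    intro i j hj hj' a ha b hb
    have hja : ¬ (j + 1 = mu i) := by have : j + 1 < mu i := hj'; omega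
    unfold Ntab at ha hb
    dsimp only at ha hb
    rw [if_neg hja, Finset.mem_singleton] at ha
    subst ha
    split at hb
    · rw [Finset.mem_Icc] at hb; omega
    · rw [Finset.mem_singleton] at hb; omega
  col := by
    intro i j hj hj' a ha b hb
    have hiℓ : i + 1 < ℓ := by
      by_contra h
      have := hmu.2.2 (i + 1) (by omega)
      have : j < mu (i + 1) := hj'
      omega
    have hlt : mu (i + 1) < mu i := hmu.1 i hiℓ
    have hja : ¬ (j + 1 = mu i) := by have : j < mu (i + 1) := hj'; omega
    unfold Ntab at ha hb
    dsimp only at ha hb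
    rw [if_neg hja, Finset.mem_singleton] at ha
    subst ha
    split at hb
    · rw [Finset.mem_Icc] at hb; omega
    · rw [Finset.mem_singleton] at hb; omega

lemma gauss (ℓ : ℕ) : (∑ i ∈ Finset.range ℓ, ((i : ℤ) + 1)) * 2 = ℓ * (ℓ + 1) := by
  induction ℓ with
  | zero => simp
  | succ k ih =>
    rw [Finset.sum_range_succ]
    push_cast
    push_cast at ih
    linarith

/-- for any strict partition `mu` of length `ℓ` and any `n ≥ ℓ`,
the tableau `N_{mu,n}` is a valid semistandard set-valued tableau of maximum degree
among all semistandard set-valued tableaux of shape `mu` with entries in `[1,n]`,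
and its degree equals `|mu| + ℓ·n - ℓ(ℓ+1)/2` (the division is exact). -/
theorem stmt8 (mu : ℕ → ℕ) (ℓ n : ℕ) (hmu : IsStrictPartitionOf mu ℓ) (hn : ℓ ≤ n) :
    (∃ N : SVT mu n, N.T = Ntab mu n ∧
        ∀ T : SVT mu n, tabDeg mu ℓ T.T ≤ tabDeg mu ℓ N.T) ∧
      (tabDeg mu ℓ (Ntab mu n) : ℤ) =
        (∑ i ∈ Finset.range ℓ, (mu i : ℤ)) + ℓ * n - ℓ * (ℓ + 1) / 2 := by
  have hrowN : ∀ i ∈ Finset.range ℓ,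
      (∑ j ∈ Finset.range (mu i), ((Ntab mu n (i, j)).card : ℤ)) =
        (mu i : ℤ) - 1 + ((n : ℤ) - i) := by
    intro i hi
    rw [Finset.mem_range] at hi
    exact Ntab_row_sum mu n i (hmu.2.1 i hi) (by omega)
  constructor
  · refine ⟨NtabSVT mu ℓ n hmu hn, rfl, ?_⟩
    intro T
    have h : (tabDeg mu ℓ T.T : ℤ) ≤ (tabDeg mu ℓ (Ntab mu n) : ℤ) := by
      unfold tabDeg
      push_cast
      apply Finset.sum_le_sum
      intro i hi
      rw [hrowN i hi]
      rw [Finset.mem_range] at hi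
      exact row_sum_le mu ℓ n hmu T i hi
    exact_mod_cast h
  · unfold tabDeg
    push_cast
    rw [Finset.sum_congr rfl hrowN]
    have hg := gauss ℓ
    have hsum : (∑ i ∈ Finset.range ℓ, ((mu i : ℤ) - 1 + ((n : ℤ) - i)))
        = (∑ i ∈ Finset.range ℓ, (mu i : ℤ)) + ℓ * n
          - (∑ i ∈ Finset.range ℓ, ((i : ℤ) + 1)) := by
      rw [Finset.sum_add_distrib, Finset.sum_sub_distrib, Finset.sum_sub_distrib,
        Finset.sum_add_distrib, Finset.sum_const, Finset.sum_const, Finset.card_range]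
      ring
    rw [hsum]
    omega
end
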